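/- Let N be a g-pure-injective O_X-module on a ringed space X. Then every restriction map N(V) → N(W) (for open W ⊆ V) is a split epimorphism of O_X(V)-modules, and for every open U ⊆ X, the direct image ι_{U,*}(N|_U) is a direct summand of N. -/

import Mathlib

open TopologicalSpace CategoryTheory

universe u

namespace SheafPurity

/-! ## Purity for modules over a ring (via finite systems of linear equations) -/

/-- A linear map is a pure monomorphism if it is injective and every finite system of
linear equations with constants in `A` that is solvable in `B` is solvable in `A`. -/
def IsPureMono {R : Type u} [Ring R] {A B : Type u} [AddCommGroup A] [Module R A]
    [AddCommGroup B] [Module R B] (f : A →ₗ[R] B) : Prop :=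
  Function.Injective f ∧
    ∀ (m n : ℕ) (G : Matrix (Fin m) (Fin n) R) (a : Fin m → A) (b : Fin n → B),
      (∀ i, (∑ j, G i j • b j) = f (a i)) →
      ∃ a' : Fin n → A, ∀ i, (∑ j, G i j • a' j) = a i

/-- A module is pure-injective if every morphism to it extends along pure monomorphisms. -/
def PureInjectiveModule (R : Type u) [Ring R] (M : Type u) [AddCommGroup M]
    [Module R M] : Prop :=
  ∀ (A B : Type u) [AddCommGroup A] [Module R A] [AddCommGroup B] [Module R B]
    (f : A →ₗ[R] B), IsPureMono f → ∀ g : A →ₗ[R] M, ∃ h : B →ₗ[R] M, h.comp f = g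

/-! ## Sheaves of rings and sheaves of modules on a topological space -/

variable (X : Type u) [TopologicalSpace X]

/-- The sheaf condition for a family of sections with restriction maps: compatible
families of sections over a cover glue uniquely. -/
def IsSheafFamily (F : Opens X → Type u)
    (res : ∀ (U V : Opens X), V ≤ U → F U → F V) : Prop :=
  ∀ (ι : Type u) (U : Opens X) (V : ι → Opens X) (hU : U = iSup V) (s : ∀ i, F (V i)),
    (∀ (i j : ι) (W : Opens X) (hWi : W ≤ V i) (hWj : W ≤ V j),
      res (V i) W hWi (s i) = res (V j) W hWj (s j)) →
    ∃! t : F U, ∀ i, res U (V i) ((le_iSup V i).trans hU.ge) t = s i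

/-- A sheaf of commutative rings on `X`; `X` together with such a sheaf is a ringed space. -/
structure RingSheaf where
  obj : Opens X → Type u
  ring : ∀ U, CommRing (obj U)
  res : ∀ {U V : Opens X}, V ≤ U → obj U →+* obj V
  res_id : ∀ {U : Opens X} (s : obj U), res le_rfl s = s
  res_res : ∀ {U V W : Opens X} (h1 : W ≤ V) (h2 : V ≤ U) (s : obj U),
    res h1 (res h2 s) = res (h1.trans h2) s
  sheaf : IsSheafFamily X obj fun _ _ h s => res h s

attribute [instance] RingSheaf.ring

variable {X}

/-- A sheaf of `O`-modules on the ringed space `(X, O)`. -/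
structure OMod (O : RingSheaf X) where
  obj : Opens X → Type u
  acg : ∀ U, AddCommGroup (obj U)
  mod : ∀ U, Module (O.obj U) (obj U)
  res : ∀ {U V : Opens X}, V ≤ U → obj U →+ obj V
  res_id : ∀ {U : Opens X} (s : obj U), res le_rfl s = s
  res_res : ∀ {U V W : Opens X} (h1 : W ≤ V) (h2 : V ≤ U) (s : obj U),
    res h1 (res h2 s) = res (h1.trans h2) s
  res_smul : ∀ {U V : Opens X} (h : V ≤ U) (r : O.obj U) (m : obj U),
    res h (r • m) = O.res h r • res h m
  sheaf : IsSheafFamily X obj fun _ _ h s => res h s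

attribute [instance] OMod.acg OMod.mod

variable {O : RingSheaf X}

/-- Morphisms of sheaves of `O`-modules. -/
@[ext]
structure Hom (M N : OMod O) where
  app : ∀ U, M.obj U →ₗ[O.obj U] N.obj U
  naturality : ∀ {U V : Opens X} (h : V ≤ U) (m : M.obj U),
    N.res h (app U m) = app V (M.res h m)

instance : Category (OMod O) where
  Hom M N := Hom M N
  id M := ⟨fun _ => LinearMap.id, fun _ _ => rfl⟩
  comp f g := ⟨fun U => (g.app U).comp (f.app U), fun h m => by
    simp only [LinearMap.comp_apply]
    rw [g.naturality, f.naturality]⟩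
  id_comp f := by apply Hom.ext; rfl
  comp_id f := by apply Hom.ext; rfl
  assoc f g h := by apply Hom.ext; rfl

lemma hom_app {M N : OMod O} (f : M ⟶ N) (U : Opens X) : (f : Hom M N).app U = f.app U := rfl

@[simp] lemma comp_app {M N P : OMod O} (f : M ⟶ N) (g : N ⟶ P) (U : Opens X) (m : M.obj U) :
    (f ≫ g).app U m = g.app U (f.app U m) := rfl

@[simp] lemma id_app (M : OMod O) (U : Opens X) (m : M.obj U) :
    (Hom.app (𝟙 M) U) m = m := rfl

end SheafPurity

namespace SheafPurity

variable {X : Type u} [TopologicalSpace X] {O : RingSheaf X}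

/-! ## Stalks -/

/-- An open neighbourhood of `x`. -/
structure Nbhd (x : X) where
  U : Opens X
  mem : x ∈ U

instance (x : X) : Inhabited (Nbhd x) := ⟨⟨⊤, trivial⟩⟩

/-- Intersection of neighbourhoods. -/
def Nbhd.inf {x : X} (N₁ N₂ : Nbhd x) : Nbhd x := ⟨N₁.U ⊓ N₂.U, ⟨N₁.mem, N₂.mem⟩⟩

lemma Nbhd.inf_le_left {x : X} (N₁ N₂ : Nbhd x) : (N₁.inf N₂).U ≤ N₁.U := _root_.inf_le_left
lemma Nbhd.inf_le_right {x : X} (N₁ N₂ : Nbhd x) : (N₁.inf N₂).U ≤ N₂.U := _root_.inf_le_right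

/-- The germ relation. -/
def germRel (M : OMod O) (x : X) :
    (Σ N : Nbhd x, M.obj N.U) → (Σ N : Nbhd x, M.obj N.U) → Prop :=
  fun a b => ∃ (N : Nbhd x) (h₁ : N.U ≤ a.1.U) (h₂ : N.U ≤ b.1.U),
    M.res h₁ a.2 = M.res h₂ b.2

/-- The stalk of a sheaf of modules at a point. -/
def Stalk (M : OMod O) (x : X) : Type u := Quot (germRel M x)

/-- The germ of a section. -/
def germ {M : OMod O} {x : X} (N : Nbhd x) (s : M.obj N.U) : Stalk M x :=
  Quot.mk _ ⟨N, s⟩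

lemma germ_eq {M : OMod O} {x : X} {N₁ N₂ : Nbhd x} {s₁ : M.obj N₁.U} {s₂ : M.obj N₂.U}
    (N : Nbhd x) (h₁ : N.U ≤ N₁.U) (h₂ : N.U ≤ N₂.U)
    (h : M.res h₁ s₁ = M.res h₂ s₂) : germ N₁ s₁ = germ N₂ s₂ :=
  Quot.sound ⟨N, h₁, h₂, h⟩

lemma germ_res {M : OMod O} {x : X} {N₁ N₂ : Nbhd x} (h : N₂.U ≤ N₁.U) (s : M.obj N₁.U) :
    germ N₂ (M.res h s) = germ N₁ s :=
  germ_eq N₂ le_rfl h (by rw [M.res_id])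

lemma germ_surj {M : OMod O} {x : X} (t : Stalk M x) : ∃ (N : Nbhd x) (s : M.obj N.U), t = germ N s := by
  induction t using Quot.ind with
  | _ a => exact ⟨a.1, a.2, rfl⟩

/-- Lift a binary germ-compatible operation to stalks. -/
def lift₂ {M₁ M₂ : OMod O} {x : X} {γ : Sort*}
    (f : ∀ (N₁ : Nbhd x), M₁.obj N₁.U → ∀ (N₂ : Nbhd x), M₂.obj N₂.U → γ)
    (hl : ∀ N₁ s₁ N₁' s₁' N₂ s₂, germRel M₁ x ⟨N₁, s₁⟩ ⟨N₁', s₁'⟩ →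
      f N₁ s₁ N₂ s₂ = f N₁' s₁' N₂ s₂)
    (hr : ∀ N₁ s₁ N₂ s₂ N₂' s₂', germRel M₂ x ⟨N₂, s₂⟩ ⟨N₂', s₂'⟩ →
      f N₁ s₁ N₂ s₂ = f N₁ s₁ N₂' s₂') :
    Stalk M₁ x → Stalk M₂ x → γ :=
  Quot.lift
    (fun a => Quot.lift (fun b => f a.1 a.2 b.1 b.2)
      (fun b b' hb => hr a.1 a.2 b.1 b.2 b'.1 b'.2 hb))
    (fun a a' ha => funext fun t => by
      induction t using Quot.ind with
      | _ b => exact hl a.1 a.2 a'.1 a'.2 b.1 b.2 ha)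

@[simp] lemma lift₂_germ {M₁ M₂ : OMod O} {x : X} {γ : Sort*}
    (f : ∀ (N₁ : Nbhd x), M₁.obj N₁.U → ∀ (N₂ : Nbhd x), M₂.obj N₂.U → γ) (hl hr)
    (N₁ : Nbhd x) (s₁ : M₁.obj N₁.U) (N₂ : Nbhd x) (s₂ : M₂.obj N₂.U) :
    lift₂ (γ := γ) f hl hr (germ N₁ s₁) (germ N₂ s₂) = f N₁ s₁ N₂ s₂ := rfl

end SheafPurity

namespace SheafPurity

variable {X : Type u} [TopologicalSpace X] {O : RingSheaf X}

protected def Stalk.add {M : OMod O} {x : X} : Stalk M x → Stalk M x → Stalk M x :=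
  lift₂ (fun N₁ s₁ N₂ s₂ => germ (N₁.inf N₂)
      (M.res (N₁.inf_le_left N₂) s₁ + M.res (N₁.inf_le_right N₂) s₂))
    (by
      rintro N₁ s₁ N₁' s₁' N₂ s₂ ⟨W, h₁, h₂, he⟩
      refine germ_eq (W.inf N₂) (show (W.inf N₂).U ≤ (N₁.inf N₂).U from inf_le_inf_right _ h₁)
        (show (W.inf N₂).U ≤ (N₁'.inf N₂).U from inf_le_inf_right _ h₂) ?_
      simp only [map_add, M.res_res]
      congr 1
      rw [← M.res_res (W.inf_le_left N₂) h₁, he, M.res_res])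
    (by
      rintro N₁ s₁ N₂ s₂ N₂' s₂' ⟨W, h₁, h₂, he⟩
      refine germ_eq (N₁.inf W) (show (N₁.inf W).U ≤ (N₁.inf N₂).U from inf_le_inf_left _ h₁)
        (show (N₁.inf W).U ≤ (N₁.inf N₂').U from inf_le_inf_left _ h₂) ?_
      simp only [map_add, M.res_res]
      congr 1
      rw [← M.res_res (N₁.inf_le_right W) h₁, he, M.res_res])

protected def Stalk.neg {M : OMod O} {x : X} : Stalk M x → Stalk M x :=
  Quot.lift (fun a => germ a.1 (-a.2)) (by
    rintro a b ⟨W, h₁, h₂, he⟩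
    exact germ_eq W h₁ h₂ (by simp only [map_neg, he]))

@[simp] lemma add_germ {M : OMod O} {x : X} (N₁ N₂ : Nbhd x) (s₁ : M.obj N₁.U)
    (s₂ : M.obj N₂.U) : Stalk.add (germ N₁ s₁) (germ N₂ s₂) =
      germ (N₁.inf N₂) (M.res (N₁.inf_le_left N₂) s₁ + M.res (N₁.inf_le_right N₂) s₂) := rfl

@[simp] lemma neg_germ {M : OMod O} {x : X} (N : Nbhd x) (s : M.obj N.U) :
    Stalk.neg (germ N s) = germ N (-s) := rfl


section AddGroup
variable {M : OMod O} {x : X}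

set_option maxHeartbeats 1000000 in
lemma stalk_add_assoc (a b c : Stalk M x) :
    Stalk.add (Stalk.add a b) c = Stalk.add a (Stalk.add b c) := by
  obtain ⟨N₁, s₁, rfl⟩ := germ_surj a
  obtain ⟨N₂, s₂, rfl⟩ := germ_surj b
  obtain ⟨N₃, s₃, rfl⟩ := germ_surj c
  simp only [add_germ]
  refine germ_eq ((N₁.inf N₂).inf N₃) le_rfl (le_of_eq (inf_assoc _ _ _)) ?_
  simp only [map_add, M.res_res, add_assoc]

lemma stalk_zero_add (a : Stalk M x) :
    Stalk.add (germ (default : Nbhd x) 0) a = a := by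
  obtain ⟨N, s, rfl⟩ := germ_surj a
  simp only [add_germ]
  refine germ_eq ((default : Nbhd x).inf N) le_rfl (Nbhd.inf_le_right _ _) ?_
  simp only [map_add, map_zero, M.res_res, zero_add]

lemma stalk_add_zero (a : Stalk M x) :
    Stalk.add a (germ (default : Nbhd x) 0) = a := by
  obtain ⟨N, s, rfl⟩ := germ_surj a
  simp only [add_germ]
  refine germ_eq (N.inf (default : Nbhd x)) le_rfl (Nbhd.inf_le_left _ _) ?_
  simp only [map_add, map_zero, M.res_res, add_zero]

lemma stalk_add_comm (a b : Stalk M x) : Stalk.add a b = Stalk.add b a := by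
  obtain ⟨N₁, s₁, rfl⟩ := germ_surj a
  obtain ⟨N₂, s₂, rfl⟩ := germ_surj b
  simp only [add_germ]
  refine germ_eq (N₁.inf N₂) le_rfl (le_of_eq (inf_comm _ _)) ?_
  simp only [map_add, M.res_res, add_comm]

lemma stalk_neg_add_cancel (a : Stalk M x) :
    Stalk.add (Stalk.neg a) a = germ (default : Nbhd x) 0 := by
  obtain ⟨N, s, rfl⟩ := germ_surj a
  simp only [neg_germ, add_germ]
  refine germ_eq (N.inf N) le_rfl le_top ?_
  simp only [map_add, map_neg, map_zero, neg_add_cancel]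

instance : Add (Stalk M x) := ⟨Stalk.add⟩
instance : Neg (Stalk M x) := ⟨Stalk.neg⟩
instance : Zero (Stalk M x) := ⟨germ (default : Nbhd x) 0⟩

instance : AddCommGroup (Stalk M x) where
  add := (· + ·)
  neg := Neg.neg
  zero := 0
  add_assoc := stalk_add_assoc
  zero_add := stalk_zero_add
  add_zero := stalk_add_zero
  add_comm := stalk_add_comm
  neg_add_cancel := stalk_neg_add_cancel
  nsmul := nsmulRec
  nsmul_zero := fun _ => rfl
  nsmul_succ := fun _ _ => rfl
  zsmul := zsmulRec
  zsmul_zero' := fun _ => rfl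
  zsmul_succ' := fun _ _ => rfl
  zsmul_neg' := fun _ _ => rfl

end AddGroup

@[simp] lemma germ_add {M : OMod O} {x : X} (N : Nbhd x) (s t : M.obj N.U) :
    (germ N (s + t) : Stalk M x) = germ N s + germ N t := by
  show _ = Stalk.add _ _
  simp only [add_germ]
  exact germ_eq (N.inf N) (Nbhd.inf_le_left _ _) le_rfl (by simp [map_add, M.res_res])

@[simp] lemma germ_zero {M : OMod O} {x : X} (N : Nbhd x) :
    (germ N (0 : M.obj N.U) : Stalk M x) = 0 := by
  show _ = germ (default : Nbhd x) 0
  exact germ_eq N le_rfl le_top (by simp)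

end SheafPurity

namespace SheafPurity

variable {X : Type u} [TopologicalSpace X] {O : RingSheaf X}

section MoreStalk
variable {M : OMod O} {x : X}

@[simp] lemma add_germ' (N₁ N₂ : Nbhd x) (s₁ : M.obj N₁.U) (s₂ : M.obj N₂.U) :
    germ N₁ s₁ + germ N₂ s₂ =
      germ (N₁.inf N₂) (M.res (N₁.inf_le_left N₂) s₁ + M.res (N₁.inf_le_right N₂) s₂) := rfl

@[simp] lemma neg_germ' (N : Nbhd x) (s : M.obj N.U) :
    -(germ N s) = germ N (-s) := rfl

lemma zero_def : (0 : Stalk M x) = germ (default : Nbhd x) 0 := rfl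

end MoreStalk

/-- A sheaf of rings, regarded as a sheaf of modules over itself. -/
@[reducible] def RingSheaf.toOMod (O : RingSheaf X) : OMod O where
  obj := O.obj
  acg U := inferInstance
  mod U := inferInstance
  res h := (O.res h).toAddMonoidHom
  res_id := O.res_id
  res_res := O.res_res
  res_smul h r m := by simpa [smul_eq_mul] using map_mul (O.res h) r m
  sheaf := O.sheaf

/-- The stalk of the structure sheaf at a point. -/
abbrev RStalk (O : RingSheaf X) (x : X) : Type u := Stalk O.toOMod x

section RingStalk

variable {x : X}

@[simp] lemma rh_apply {α β : Type u} [NonAssocSemiring α] [NonAssocSemiring β]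
    (f : α →+* β) (a : α) : f.toAddMonoidHom a = f a := rfl

@[simp] lemma toOMod_res {U V : Opens X} (h : V ≤ U) (s : O.obj U) :
    O.toOMod.res h s = O.res h s := rfl

protected def RStalk.mul : RStalk O x → RStalk O x → RStalk O x :=
  lift₂ (fun N₁ s₁ N₂ s₂ => germ (N₁.inf N₂)
      (O.res (N₁.inf_le_left N₂) s₁ * O.res (N₁.inf_le_right N₂) s₂))
    (by
      rintro N₁ s₁ N₁' s₁' N₂ s₂ ⟨W, h₁, h₂, he⟩
      refine germ_eq (W.inf N₂) (show (W.inf N₂).U ≤ (N₁.inf N₂).U from inf_le_inf_right _ h₁)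
        (show (W.inf N₂).U ≤ (N₁'.inf N₂).U from inf_le_inf_right _ h₂) ?_
      have he' : O.res h₁ s₁ = O.res h₂ s₁' := he
      show O.res _ _ = O.res _ _
      simp only [map_mul, O.res_res]
      congr 1
      rw [← O.res_res (W.inf_le_left N₂) h₁, he', O.res_res])
    (by
      rintro N₁ s₁ N₂ s₂ N₂' s₂' ⟨W, h₁, h₂, he⟩
      refine germ_eq (N₁.inf W) (show (N₁.inf W).U ≤ (N₁.inf N₂).U from inf_le_inf_left _ h₁)
        (show (N₁.inf W).U ≤ (N₁.inf N₂').U from inf_le_inf_left _ h₂) ?_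
      have he' : O.res h₁ s₂ = O.res h₂ s₂' := he
      show O.res _ _ = O.res _ _
      simp only [map_mul, O.res_res]
      congr 1
      rw [← O.res_res (N₁.inf_le_right W) h₁, he', O.res_res])

instance : Mul (RStalk O x) := ⟨RStalk.mul⟩
instance : One (RStalk O x) := ⟨germ (M := O.toOMod) (default : Nbhd x) 1⟩

@[simp] lemma mul_germ (N₁ N₂ : Nbhd x) (s₁ : O.obj N₁.U) (s₂ : O.obj N₂.U) :
    (germ (M := O.toOMod) N₁ s₁) * (germ (M := O.toOMod) N₂ s₂) =
      germ (N₁.inf N₂) (O.res (N₁.inf_le_left N₂) s₁ * O.res (N₁.inf_le_right N₂) s₂) := rfl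

lemma one_def : (1 : RStalk O x) = germ (M := O.toOMod) (default : Nbhd x) 1 := rfl


section RingAx
variable {x : X}

lemma r_mul_assoc (a b c : RStalk O x) : a * b * c = a * (b * c) := by
  obtain ⟨N₁, s₁, rfl⟩ := germ_surj a
  obtain ⟨N₂, s₂, rfl⟩ := germ_surj b
  obtain ⟨N₃, s₃, rfl⟩ := germ_surj c
  simp only [mul_germ]
  refine germ_eq ((N₁.inf N₂).inf N₃) le_rfl (le_of_eq (inf_assoc _ _ _)) ?_
  simp only [rh_apply, map_mul, O.res_res, mul_assoc]

lemma r_one_mul (a : RStalk O x) : 1 * a = a := by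
  obtain ⟨N, s, rfl⟩ := germ_surj a
  rw [one_def]
  simp only [mul_germ]
  refine germ_eq ((default : Nbhd x).inf N) le_rfl (Nbhd.inf_le_right _ _) ?_
  simp only [rh_apply, map_mul, map_one, O.res_res, one_mul]

lemma r_mul_comm (a b : RStalk O x) : a * b = b * a := by
  obtain ⟨N₁, s₁, rfl⟩ := germ_surj a
  obtain ⟨N₂, s₂, rfl⟩ := germ_surj b
  simp only [mul_germ]
  refine germ_eq (N₁.inf N₂) le_rfl (le_of_eq (inf_comm _ _)) ?_
  simp only [rh_apply, map_mul, O.res_res, mul_comm]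

lemma r_mul_one (a : RStalk O x) : a * 1 = a := by
  rw [r_mul_comm, r_one_mul]

lemma r_left_distrib (a b c : RStalk O x) : a * (b + c) = a * b + a * c := by
  obtain ⟨N₁, s₁, rfl⟩ := germ_surj a
  obtain ⟨N₂, s₂, rfl⟩ := germ_surj b
  obtain ⟨N₃, s₃, rfl⟩ := germ_surj c
  simp only [add_germ' (M := O.toOMod), mul_germ]
  refine germ_eq (N₁.inf (N₂.inf N₃)) le_rfl
    (show (N₁.inf (N₂.inf N₃)).U ≤ ((N₁.inf N₂).inf (N₁.inf N₃)).U from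
    (le_inf (inf_le_inf_left _ (Nbhd.inf_le_left _ _))
      (inf_le_inf_left _ (Nbhd.inf_le_right _ _)))) ?_
  simp only [rh_apply, map_mul, map_add, O.res_res, mul_add]

lemma r_right_distrib (a b c : RStalk O x) : (a + b) * c = a * c + b * c := by
  rw [r_mul_comm, r_left_distrib, r_mul_comm c a, r_mul_comm c b]

lemma r_zero_mul (a : RStalk O x) : 0 * a = 0 := by
  obtain ⟨N, s, rfl⟩ := germ_surj a
  rw [zero_def]
  simp only [mul_germ]
  refine germ_eq ((default : Nbhd x).inf N) le_rfl le_top ?_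
  simp only [rh_apply, map_mul, map_zero, zero_mul]

lemma r_mul_zero (a : RStalk O x) : a * 0 = 0 := by
  rw [r_mul_comm, r_zero_mul]

instance : CommRing (RStalk O x) where
  __ := (inferInstance : AddCommGroup (Stalk (O.toOMod) x))
  mul := (· * ·)
  one := 1
  mul_assoc := r_mul_assoc
  one_mul := r_one_mul
  mul_one := r_mul_one
  mul_comm := r_mul_comm
  left_distrib := r_left_distrib
  right_distrib := r_right_distrib
  zero_mul := r_zero_mul
  mul_zero := r_mul_zero

end RingAx

/-- The germ map for the structure sheaf, as a ring homomorphism. -/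
def RingSheaf.germHom (O : RingSheaf X) {x : X} (N : Nbhd x) : O.obj N.U →+* RStalk O x where
  toFun s := germ (M := O.toOMod) N s
  map_one' := by
    rw [one_def]
    exact germ_eq N le_rfl le_top (by simp only [rh_apply, map_one])
  map_mul' r s := by
    show germ (M := O.toOMod) N (r * s) = germ (M := O.toOMod) N r * germ (M := O.toOMod) N s
    rw [mul_germ]
    exact germ_eq (N.inf N) (Nbhd.inf_le_left _ _) le_rfl
      (by simp only [rh_apply, map_mul, O.res_res])
  map_zero' := by
    show germ (M := O.toOMod) N 0 = 0
    exact germ_zero (M := O.toOMod) N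
  map_add' r s := by
    show germ (M := O.toOMod) N (r + s) = germ (M := O.toOMod) N r + germ (M := O.toOMod) N s
    exact germ_add (M := O.toOMod) N r s

@[simp] lemma germHom_apply {x : X} (N : Nbhd x) (s : O.obj N.U) :
    O.germHom N s = germ (M := O.toOMod) N s := rfl

lemma germ_res_ring {x : X} {N₁ N₂ : Nbhd x} (h : N₂.U ≤ N₁.U) (s : O.obj N₁.U) :
    germ (M := O.toOMod) N₂ (O.res h s) = germ (M := O.toOMod) N₁ s :=
  germ_res (M := O.toOMod) h s

end RingStalk

end SheafPurity

namespace SheafPurity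

variable {X : Type u} [TopologicalSpace X] {O : RingSheaf X}

section ModuleStalk

variable {M : OMod O} {x : X}

protected def Stalk.smul : RStalk O x → Stalk M x → Stalk M x :=
  lift₂ (fun N₁ r N₂ s => germ (N₁.inf N₂)
      (O.res (N₁.inf_le_left N₂) r • M.res (N₁.inf_le_right N₂) s))
    (by
      rintro N₁ r N₁' r' N₂ s ⟨W, h₁, h₂, he⟩
      refine germ_eq (W.inf N₂) (show (W.inf N₂).U ≤ (N₁.inf N₂).U from inf_le_inf_right _ h₁)
        (show (W.inf N₂).U ≤ (N₁'.inf N₂).U from inf_le_inf_right _ h₂) ?_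
      have he' : O.res h₁ r = O.res h₂ r' := he
      simp only [map_add, M.res_smul, M.res_res, O.res_res]
      congr 1
      rw [← O.res_res (W.inf_le_left N₂) h₁, he', O.res_res])
    (by
      rintro N₁ r N₂ s N₂' s' ⟨W, h₁, h₂, he⟩
      refine germ_eq (N₁.inf W) (show (N₁.inf W).U ≤ (N₁.inf N₂).U from inf_le_inf_left _ h₁)
        (show (N₁.inf W).U ≤ (N₁.inf N₂').U from inf_le_inf_left _ h₂) ?_
      simp only [M.res_smul, M.res_res, O.res_res]
      congr 1
      rw [← M.res_res (N₁.inf_le_right W) h₁, he, M.res_res])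

instance : SMul (RStalk O x) (Stalk M x) := ⟨Stalk.smul⟩

@[simp] lemma smul_germ (N₁ N₂ : Nbhd x) (r : O.obj N₁.U) (s : M.obj N₂.U) :
    (germ (M := O.toOMod) N₁ r) • (germ N₂ s) =
      germ (N₁.inf N₂) (O.res (N₁.inf_le_left N₂) r • M.res (N₁.inf_le_right N₂) s) := rfl

lemma st_one_smul (a : Stalk M x) : (1 : RStalk O x) • a = a := by
  obtain ⟨N, s, rfl⟩ := germ_surj a
  rw [one_def]
  simp only [smul_germ]
  refine germ_eq ((default : Nbhd x).inf N) le_rfl (Nbhd.inf_le_right _ _) ?_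
  simp only [M.res_smul, M.res_res, map_one, one_smul]

lemma st_mul_smul (r t : RStalk O x) (a : Stalk M x) : (r * t) • a = r • t • a := by
  obtain ⟨N₁, r, rfl⟩ := germ_surj r
  obtain ⟨N₂, t, rfl⟩ := germ_surj t
  obtain ⟨N₃, s, rfl⟩ := germ_surj a
  simp only [mul_germ, smul_germ]
  refine germ_eq ((N₁.inf N₂).inf N₃) le_rfl (le_of_eq (inf_assoc _ _ _)) ?_
  simp only [rh_apply, M.res_smul, M.res_res, O.res_res, map_mul, mul_smul]

lemma st_smul_add (r : RStalk O x) (a b : Stalk M x) : r • (a + b) = r • a + r • b := by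
  obtain ⟨N₁, rr, rfl⟩ := germ_surj r
  obtain ⟨N₂, s, rfl⟩ := germ_surj a
  obtain ⟨N₃, t, rfl⟩ := germ_surj b
  simp only [add_germ', smul_germ]
  refine germ_eq (N₁.inf (N₂.inf N₃)) le_rfl
    (show (N₁.inf (N₂.inf N₃)).U ≤ ((N₁.inf N₂).inf (N₁.inf N₃)).U from
    (le_inf (inf_le_inf_left _ (Nbhd.inf_le_left _ _))
      (inf_le_inf_left _ (Nbhd.inf_le_right _ _)))) ?_
  simp only [rh_apply, M.res_smul, M.res_res, O.res_res, map_add, smul_add]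

lemma st_smul_zero (r : RStalk O x) : r • (0 : Stalk M x) = 0 := by
  obtain ⟨N, rr, rfl⟩ := germ_surj r
  rw [zero_def]
  simp only [smul_germ]
  refine germ_eq (N.inf (default : Nbhd x)) le_rfl le_top ?_
  simp only [map_zero, smul_zero]

lemma st_add_smul (r t : RStalk O x) (a : Stalk M x) : (r + t) • a = r • a + t • a := by
  obtain ⟨N₁, rr, rfl⟩ := germ_surj r
  obtain ⟨N₂, tt, rfl⟩ := germ_surj t
  obtain ⟨N₃, s, rfl⟩ := germ_surj a
  simp only [add_germ', smul_germ]
  refine germ_eq ((N₁.inf N₂).inf N₃) le_rfl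
    (show ((N₁.inf N₂).inf N₃).U ≤ ((N₁.inf N₃).inf (N₂.inf N₃)).U from
    (le_inf (inf_le_inf_right _ (Nbhd.inf_le_left _ _))
      (inf_le_inf_right _ (Nbhd.inf_le_right _ _)))) ?_
  simp only [rh_apply, M.res_smul, M.res_res, O.res_res, map_add, add_smul]

lemma st_zero_smul (a : Stalk M x) : (0 : RStalk O x) • a = 0 := by
  obtain ⟨N, s, rfl⟩ := germ_surj a
  rw [zero_def]
  simp only [smul_germ]
  refine germ_eq ((default : Nbhd x).inf N) le_rfl le_top ?_
  simp only [rh_apply, map_zero, zero_smul]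

instance : Module (RStalk O x) (Stalk M x) where
  smul := (· • ·)
  one_smul := st_one_smul
  mul_smul := st_mul_smul
  smul_add := st_smul_add
  smul_zero := st_smul_zero
  add_smul := st_add_smul
  zero_smul := st_zero_smul

lemma germ_smul (N : Nbhd x) (r : O.obj N.U) (s : M.obj N.U) :
    (germ N (r • s) : Stalk M x) = O.germHom N r • germ N s := by
  rw [germHom_apply]
  simp only [smul_germ]
  exact germ_eq (N.inf N) (Nbhd.inf_le_left _ _) le_rfl
    (by simp only [M.res_smul, M.res_res, O.res_res, rh_apply])

end ModuleStalk

/-- The underlying function of the map induced on stalks by a morphism. -/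
def stalkMapFun {M N : OMod O} (f : Hom M N) (x : X) : Stalk M x → Stalk N x :=
  Quot.lift (fun a => germ a.1 (f.app _ a.2)) (by
    rintro a b ⟨W, h₁, h₂, he⟩
    refine germ_eq W h₁ h₂ ?_
    rw [f.naturality, f.naturality, he])

@[simp] lemma stalkMapFun_germ {M N : OMod O} (f : Hom M N) (x : X)
    (Nb : Nbhd x) (s : M.obj Nb.U) :
    stalkMapFun f x (germ Nb s) = germ Nb (f.app Nb.U s) := rfl

/-- The map induced on stalks by a morphism of sheaves of modules, as a linear map
over the stalk of the structure sheaf. -/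
def stalkMap {M N : OMod O} (f : M ⟶ N) (x : X) : Stalk M x →ₗ[RStalk O x] Stalk N x where
  toFun := stalkMapFun f x
  map_add' a b := by
    obtain ⟨N₁, s₁, rfl⟩ := germ_surj a
    obtain ⟨N₂, s₂, rfl⟩ := germ_surj b
    simp only [add_germ', stalkMapFun_germ]
    refine germ_eq (N₁.inf N₂) le_rfl le_rfl ?_
    simp only [map_add, N.res_res, M.res_res, Hom.naturality]
  map_smul' r a := by
    obtain ⟨N₁, rr, rfl⟩ := germ_surj r
    obtain ⟨N₂, s, rfl⟩ := germ_surj a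
    simp only [smul_germ, stalkMapFun_germ, RingHom.id_apply]
    refine germ_eq (N₁.inf N₂) le_rfl le_rfl ?_
    simp only [map_smul, N.res_smul, M.res_res, N.res_res, O.res_res, Hom.naturality]

@[simp] lemma stalkMap_germ {M N : OMod O} (f : M ⟶ N) (x : X) (Nb : Nbhd x) (s : M.obj Nb.U) :
    stalkMap f x (germ Nb s) = germ Nb ((f : Hom M N).app Nb.U s) := rfl

/-! ## Geometric purity -/

/-- A morphism of sheaves of modules is a geometrically pure monomorphism if it is a
monomorphism (i.e. injective on sections) and the induced map on every stalk is a pure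
monomorphism of modules over the stalk ring. -/
def IsGPureMono {M N : OMod O} (f : M ⟶ N) : Prop :=
  (∀ U, Function.Injective ((f : Hom M N).app U)) ∧
    ∀ x : X, IsPureMono (stalkMap f x)

/-- A sheaf of modules is geometrically pure-injective if every morphism to it extends
along every geometrically pure monomorphism. -/
def GPureInjective (P : OMod O) : Prop :=
  ∀ (M N : OMod O) (f : M ⟶ N), IsGPureMono f →
    ∀ φ : M ⟶ P, ∃ ψ : N ⟶ P, f ≫ ψ = φ

end SheafPurity

namespace SheafPurity

variable {X : Type u} [TopologicalSpace X] {O : RingSheaf X}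

/-! ## Skyscraper sheaves -/

section Sky

variable (x : X) (A : Type u) [AddCommGroup A] [Module (RStalk O x) A]

/-- The module structure on the sections of the skyscraper sheaf. -/
def skyModule (U : Opens X) : Module (O.obj U) (PLift (x ∈ U) → A) where
  smul r f := fun h => (O.germHom ⟨U, h.down⟩ r) • f h
  one_smul f := funext fun h => by
    show O.germHom ⟨U, h.down⟩ 1 • f h = f h
    simp
  mul_smul r t f := funext fun h => by
    show O.germHom ⟨U, h.down⟩ (r * t) • f h =
      O.germHom ⟨U, h.down⟩ r • O.germHom ⟨U, h.down⟩ t • f h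
    rw [map_mul, mul_smul]
  smul_zero r := funext fun h => by
    show O.germHom ⟨U, h.down⟩ r • (0 : A) = 0
    simp
  smul_add r f g := funext fun h => by
    show O.germHom ⟨U, h.down⟩ r • (f h + g h) =
      O.germHom ⟨U, h.down⟩ r • f h + O.germHom ⟨U, h.down⟩ r • g h
    rw [smul_add]
  add_smul r t f := funext fun h => by
    show O.germHom ⟨U, h.down⟩ (r + t) • f h =
      O.germHom ⟨U, h.down⟩ r • f h + O.germHom ⟨U, h.down⟩ t • f h
    rw [map_add, add_smul]
  zero_smul f := funext fun h => by
    show O.germHom ⟨U, h.down⟩ 0 • f h = 0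
    simp

/-- The skyscraper sheaf at `x` with value the `RStalk O x`-module `A`. -/
def sky : OMod O where
  obj U := PLift (x ∈ U) → A
  acg U := inferInstance
  mod U := skyModule x A U
  res {U V} h :=
    { toFun := fun f hv => f ⟨h hv.down⟩
      map_zero' := rfl
      map_add' := fun _ _ => rfl }
  res_id _ := rfl
  res_res _ _ _ := rfl
  res_smul {U V} h r f := by
    funext hv
    show O.germHom ⟨U, h hv.down⟩ r • f ⟨h hv.down⟩ =
      O.germHom ⟨V, hv.down⟩ (O.res h r) • f ⟨h hv.down⟩
    rw [show O.germHom (x := x) ⟨V, hv.down⟩ (O.res h r) = O.germHom ⟨U, h hv.down⟩ r from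
      germ_res_ring (N₁ := ⟨U, h hv.down⟩) (N₂ := ⟨V, hv.down⟩) h r]
  sheaf := by
    intro ι U V hU s compat
    have mem : ∀ (h : x ∈ U), ∃ i, x ∈ V i := fun h => Opens.mem_iSup.mp (hU ▸ h)
    refine ⟨fun h => s (mem h.down).choose ⟨(mem h.down).choose_spec⟩,
      fun i => funext fun hv => ?_, ?_⟩
    · have hU' : x ∈ U := ((le_iSup V i).trans hU.ge) hv.down
      exact congrFun (compat (mem hU').choose i (V (mem hU').choose ⊓ V i)
        inf_le_left inf_le_right) ⟨⟨(mem hU').choose_spec, hv.down⟩⟩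
    · intro y hy
      funext h
      obtain ⟨i, hi⟩ := mem h.down
      have h1 : y h = s i ⟨hi⟩ := congrFun (hy i) ⟨hi⟩
      have h2 : s (mem h.down).choose ⟨(mem h.down).choose_spec⟩ = s i ⟨hi⟩ :=
        congrFun (compat _ i (V (mem h.down).choose ⊓ V i) inf_le_left inf_le_right)
          ⟨⟨(mem h.down).choose_spec, hi⟩⟩
      rw [h1, h2]

end Sky

/-- Functoriality of the skyscraper sheaf. -/
def skyMap {x : X} {A B : Type u} [AddCommGroup A] [Module (RStalk O x) A]
    [AddCommGroup B] [Module (RStalk O x) B] (φ : A →ₗ[RStalk O x] B) :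
    (sky x A : OMod O) ⟶ (sky x B : OMod O) where
  app U :=
    { toFun := fun f h => φ (f h)
      map_add' := fun f g => funext fun h => by
        show φ (f h + g h) = φ (f h) + φ (g h)
        rw [map_add]
      map_smul' := fun r f => funext fun h => by
        show φ (O.germHom ⟨U, h.down⟩ r • f h) = O.germHom ⟨U, h.down⟩ r • φ (f h)
        rw [map_smul] }
  naturality _ _ := rfl

/-- The skyscraper sheaf functor. -/
def skyFunctor (O : RingSheaf X) (x : X) : ModuleCat.{u} (RStalk O x) ⥤ OMod O where
  obj A := sky x A
  map φ := skyMap φ.hom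
  map_id A := rfl
  map_comp φ ψ := rfl

end SheafPurity

namespace SheafPurity

variable {X : Type u} [TopologicalSpace X] {O : RingSheaf X}

/-! ## Direct image along the inclusion of an open subset -/

/-- The direct image `ι_{U,*}(M|_U)` of the restriction of `M` to an open set `U`:
its sections over `V` are the sections of `M` over `U ⊓ V`. -/
def pushforwardInto (U : Opens X) (M : OMod O) : OMod O where
  obj V := M.obj (U ⊓ V)
  acg V := inferInstance
  mod V := Module.compHom _ (O.res (inf_le_right : U ⊓ V ≤ V))
  res {V W} h := M.res (inf_le_inf_left U h)
  res_id s := M.res_id s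
  res_res h1 h2 s := M.res_res _ _ s
  res_smul {V W} h r m := by
    show M.res (inf_le_inf_left U h) (O.res (inf_le_right : U ⊓ V ≤ V) r • m) =
      O.res (inf_le_right : U ⊓ W ≤ W) (O.res h r) • M.res (inf_le_inf_left U h) m
    rw [M.res_smul, O.res_res, O.res_res]
  sheaf := by
    intro ι V₀ V hV s compat
    obtain ⟨t, ht, huniq⟩ := M.sheaf ι (U ⊓ V₀) (fun i => U ⊓ V i)
      (by rw [hV, inf_iSup_eq]) s
      (by
        intro i j W hWi hWj
        have hW : W ≤ U ⊓ (V i ⊓ V j) :=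
          le_inf (hWi.trans inf_le_left)
            (le_inf (hWi.trans inf_le_right) (hWj.trans inf_le_right))
        calc M.res hWi (s i)
            = M.res hW (M.res (inf_le_inf_left U inf_le_left) (s i)) := by
              rw [M.res_res]
          _ = M.res hW (M.res (inf_le_inf_left U inf_le_right) (s j)) :=
              congrArg (M.res hW) (compat i j (V i ⊓ V j) inf_le_left inf_le_right)
          _ = M.res hWj (s j) := by rw [M.res_res])
    exact ⟨t, fun i => ht i, fun y hy => huniq y fun i => hy i⟩

/-- The unit morphism `M ⟶ ι_{U,*}(M|_U)`, given by restriction of sections. -/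
def pushforwardUnit (U : Opens X) (M : OMod O) : M ⟶ pushforwardInto U M where
  app V :=
    { toFun := fun m => M.res (inf_le_right : U ⊓ V ≤ V) m
      map_add' := fun _ _ => map_add _ _ _
      map_smul' := fun r m => by
        show M.res _ (r • m) = O.res (inf_le_right : U ⊓ V ≤ V) r • M.res (inf_le_right : U ⊓ V ≤ V) m
        rw [M.res_smul] }
  naturality {V W} h m := by
    show M.res _ (M.res _ m) = M.res _ (M.res _ m)
    rw [M.res_res, M.res_res]

/-! ## Binary products -/

/-- The binary product of two sheaves of modules. -/
def prod2 (M N : OMod O) : OMod O where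
  obj U := M.obj U × N.obj U
  acg U := inferInstance
  mod U := inferInstance
  res {U V} h := (M.res h).prodMap (N.res h)
  res_id s := Prod.ext (M.res_id s.1) (N.res_id s.2)
  res_res h1 h2 s := Prod.ext (M.res_res h1 h2 s.1) (N.res_res h1 h2 s.2)
  res_smul h r m := Prod.ext (M.res_smul h r m.1) (N.res_smul h r m.2)
  sheaf := by
    intro ι U V hU s compat
    obtain ⟨t₁, ht₁, hu₁⟩ := M.sheaf ι U V hU (fun i => (s i).1)
      (fun i j W hWi hWj => congrArg Prod.fst (compat i j W hWi hWj))
    obtain ⟨t₂, ht₂, hu₂⟩ := N.sheaf ι U V hU (fun i => (s i).2)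
      (fun i j W hWi hWj => congrArg Prod.snd (compat i j W hWi hWj))
    refine ⟨(t₁, t₂), fun i => ?_, fun y hy => ?_⟩
    · exact Prod.ext (ht₁ i) (ht₂ i)
    · have h₁ : y.1 = t₁ := hu₁ y.1 fun i => congrArg Prod.fst (hy i)
      have h₂ : y.2 = t₂ := hu₂ y.2 fun i => congrArg Prod.snd (hy i)
      exact Prod.ext h₁ h₂

/-- A sheaf of modules is trivial (zero) if all its section modules are trivial. -/
def IsZeroOMod (M : OMod O) : Prop := ∀ U, Subsingleton (M.obj U)

/-- An isomorphism of sheaves of modules. -/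
structure OModIso (M N : OMod O) where
  hom : M ⟶ N
  inv : N ⟶ M
  hom_inv : hom ≫ inv = 𝟙 M
  inv_hom : inv ≫ hom = 𝟙 N

/-- A sheaf of modules is indecomposable if it is nonzero and in any direct sum
decomposition one of the summands is zero. -/
def IndecomposableOMod (M : OMod O) : Prop :=
  (¬ IsZeroOMod M) ∧
    ∀ (A B : OMod O), Nonempty (OModIso M (prod2 A B)) → IsZeroOMod A ∨ IsZeroOMod B

/-- The canonical morphism from `M` to the skyscraper at `x` with value the stalk `M_x`. -/
def toSkyStalk (M : OMod O) (x : X) : M ⟶ (sky x (Stalk M x) : OMod O) where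
  app U :=
    { toFun := fun m h => germ ⟨U, h.down⟩ m
      map_add' := fun m₁ m₂ => funext fun h => germ_add _ _ _
      map_smul' := fun r m => funext fun h => by
        show germ ⟨U, h.down⟩ (r • m) = O.germHom ⟨U, h.down⟩ r • germ ⟨U, h.down⟩ m
        exact germ_smul _ _ _ }
  naturality {U V} h m := by
    funext hv
    show germ ⟨U, h hv.down⟩ m = germ ⟨V, hv.down⟩ (M.res h m)
    exact (germ_res (N₁ := ⟨U, h hv.down⟩) (N₂ := ⟨V, hv.down⟩) h m).symm

end SheafPurity

/-! The extension by zero `ι_{U,!}(N|_U)` is realised as the subsheaf of `N` of sections that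
near every point either live over `U` or vanish. Its comparison map to `ι_{U,*}(N|_U)` is
injective on sections, bijective on stalks at points of `U`, and has zero source stalks
elsewhere, so it is a g-pure monomorphism. Extending the inclusion `ι_{U,!}(N|_U) ⟶ N` along it
by g-pure-injectivity yields a section of the unit `N ⟶ ι_{U,*}(N|_U)`, since a morphism into
`ι_{U,*}(N|_U)` is determined by its components over opens contained in `U`. Taking `U = W`,
the component of this section over `V` splits `N(V) → N(W)`. -/

namespace SheafPurity

section PureMono

variable {R : Type u} [Ring R] {A B : Type u} [AddCommGroup A] [Module R A]
  [AddCommGroup B] [Module R B]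

lemma isPureMono_of_bijective {f : A →ₗ[R] B} (hf : Function.Bijective f) : IsPureMono f := by
  refine ⟨hf.injective, fun m n G a b hGb => ⟨fun j => Function.surjInv hf.surjective (b j),
    fun i => hf.injective ?_⟩⟩
  simp only [map_sum, map_smul, Function.surjInv_eq, hGb i]

lemma isPureMono_of_subsingleton [Subsingleton A] (f : A →ₗ[R] B) : IsPureMono f :=
  ⟨fun _ _ _ => Subsingleton.elim _ _, fun _ _ _ _ _ _ => ⟨0, fun _ => Subsingleton.elim _ _⟩⟩

end PureMono

variable {X : Type u} [TopologicalSpace X] {O : RingSheaf X}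

lemma germRel_equivalence (M : OMod O) (x : X) : Equivalence (germRel M x) where
  refl a := ⟨a.1, le_rfl, le_rfl, rfl⟩
  symm := by rintro a b ⟨W, h₁, h₂, e⟩; exact ⟨W, h₂, h₁, e.symm⟩
  trans := by
    rintro a b c ⟨W₁, h₁, h₂, e₁⟩ ⟨W₂, k₁, k₂, e₂⟩
    refine ⟨W₁.inf W₂, (W₁.inf_le_left W₂).trans h₁, (W₁.inf_le_right W₂).trans k₂, ?_⟩
    rw [← M.res_res (W₁.inf_le_left W₂) h₁, e₁, M.res_res,
      ← M.res_res (W₁.inf_le_right W₂) k₁, e₂, M.res_res]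

lemma exists_res_eq_of_germ_eq {M : OMod O} {x : X} {N₁ N₂ : Nbhd x} {s₁ : M.obj N₁.U}
    {s₂ : M.obj N₂.U} (h : germ N₁ s₁ = germ N₂ s₂) :
    ∃ (W : Nbhd x) (h₁ : W.U ≤ N₁.U) (h₂ : W.U ≤ N₂.U), M.res h₁ s₁ = M.res h₂ s₂ :=
  (Equivalence.eqvGen_iff (germRel_equivalence M x)).mp (Quot.eq.mp h)

lemma OMod.res_injective (M : OMod O) {V W : Opens X} (h : W ≤ V) (h' : V ≤ W) :
    Function.Injective (M.res h) :=
  Function.LeftInverse.injective (g := M.res h') fun s => (M.res_res h' h s).trans (M.res_id s)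

lemma OMod.eq_zero_of_locally_eq_zero (M : OMod O) {V : Opens X} (t : M.obj V)
    (ht : ∀ x ∈ V, ∃ (V' : Opens X) (_ : x ∈ V') (h' : V' ≤ V), M.res h' t = 0) : t = 0 := by
  choose V' hxV' hV' hzero using ht
  let cover : {x // x ∈ V} → Opens X := fun x => V' x.1 x.2
  have hcover : V = iSup cover :=
    le_antisymm (fun x hx => Opens.mem_iSup.mpr ⟨⟨x, hx⟩, hxV' x hx⟩) (iSup_le fun x => hV' _ _)
  obtain ⟨z, -, huniq⟩ := M.sheaf _ V cover hcover (fun _ => 0)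
    (fun _ _ _ _ _ => by simp only [map_zero])
  exact (huniq t fun x => hzero _ _).trans (huniq 0 fun _ => map_zero _).symm

lemma pushforwardInto_hom_ext {U : Opens X} {N P : OMod O} {f g : P ⟶ pushforwardInto U N}
    (h : ∀ V ≤ U, ∀ s, Hom.app f V s = Hom.app g V s) : f = g := by
  refine Hom.ext (funext fun V => LinearMap.ext fun s => ?_)
  apply N.res_injective (inf_le_inf_left U inf_le_right : U ⊓ (U ⊓ V) ≤ U ⊓ V)
    (le_inf inf_le_left le_rfl)
  exact (f.naturality inf_le_right s).trans
    ((h _ inf_le_left _).trans (g.naturality inf_le_right s).symm)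

section ExtendByZero

variable (U : Opens X) (N : OMod O)

def IsLocallyOverOrZero (V : Opens X) (t : N.obj V) : Prop :=
  ∀ x ∈ V, ∃ (V' : Opens X) (_ : x ∈ V') (h' : V' ≤ V), V' ≤ U ∨ N.res h' t = 0

variable {U N} in
lemma IsLocallyOverOrZero.res {V W : Opens X} (h : W ≤ V) {t : N.obj V}
    (ht : IsLocallyOverOrZero U N V t) : IsLocallyOverOrZero U N W (N.res h t) := by
  intro x hx
  obtain ⟨V', hx', h', c⟩ := ht x (h hx)
  refine ⟨V' ⊓ W, ⟨hx', hx⟩, inf_le_right, c.imp (inf_le_left.trans ·) fun c => ?_⟩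
  rw [N.res_res, ← N.res_res (inf_le_left : V' ⊓ W ≤ V') h', c, map_zero]

lemma isLocallyOverOrZero_of_le {V : Opens X} (hVU : V ≤ U) (t : N.obj V) :
    IsLocallyOverOrZero U N V t :=
  fun _ hx => ⟨V, hx, le_rfl, Or.inl hVU⟩

def extendByZeroSubmodule (V : Opens X) : Submodule (O.obj V) (N.obj V) where
  carrier := {t | IsLocallyOverOrZero U N V t}
  zero_mem' := fun _ hx => ⟨V, hx, le_rfl, Or.inr (map_zero _)⟩
  add_mem' := by
    intro a b ha hb x hx
    obtain ⟨V₁, hx₁, h₁, c₁ | c₁⟩ := ha x hx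
    · exact ⟨V₁, hx₁, h₁, Or.inl c₁⟩
    obtain ⟨V₂, hx₂, h₂, c₂ | c₂⟩ := hb x hx
    · exact ⟨V₂, hx₂, h₂, Or.inl c₂⟩
    refine ⟨V₁ ⊓ V₂, ⟨hx₁, hx₂⟩, inf_le_left.trans h₁, Or.inr ?_⟩
    rw [map_add, ← N.res_res inf_le_left h₁, c₁, ← N.res_res inf_le_right h₂, c₂,
      map_zero, map_zero, add_zero]
  smul_mem' := by
    intro r m hm x hx
    obtain ⟨V', hx', h', c⟩ := hm x hx
    exact ⟨V', hx', h', c.imp id fun c => by rw [N.res_smul, c, smul_zero]⟩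

def extendByZero : OMod O where
  obj V := extendByZeroSubmodule U N V
  acg V := inferInstance
  mod V := inferInstance
  res {V W} h :=
    { toFun := fun t => ⟨N.res h t.1, t.2.res h⟩
      map_zero' := Subtype.ext (map_zero _)
      map_add' := fun a b => Subtype.ext (map_add _ _ _) }
  res_id t := Subtype.ext (N.res_id t.1)
  res_res h1 h2 t := Subtype.ext (N.res_res h1 h2 t.1)
  res_smul h r m := Subtype.ext (N.res_smul h r m.1)
  sheaf := by
    intro ι V₀ V hV s compat
    obtain ⟨t, ht, huniq⟩ := N.sheaf ι V₀ V hV (fun i => (s i).1)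
      (fun i j W hWi hWj => congrArg Subtype.val (compat i j W hWi hWj))
    have hP : IsLocallyOverOrZero U N V₀ t := by
      intro x hx
      obtain ⟨i, hi⟩ := Opens.mem_iSup.mp (hV ▸ hx)
      have hVi : V i ≤ V₀ := (le_iSup V i).trans hV.ge
      obtain ⟨V', hx', h', c⟩ := (s i).2 x hi
      refine ⟨V', hx', h'.trans hVi, c.imp id fun c => ?_⟩
      rw [← N.res_res h' hVi t, show N.res hVi t = (s i).1 from ht i]
      exact c
    exact ⟨⟨t, hP⟩, fun i => Subtype.ext (ht i),
      fun y hy => Subtype.ext (huniq y.1 fun i => congrArg Subtype.val (hy i))⟩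

def extendByZeroIncl : extendByZero U N ⟶ N where
  app V := (extendByZeroSubmodule U N V).subtype
  naturality _ _ := rfl

def extendByZeroToPushforward : extendByZero U N ⟶ pushforwardInto U N :=
  extendByZeroIncl U N ≫ pushforwardUnit U N

lemma extendByZeroToPushforward_app_injective (V : Opens X) :
    Function.Injective (Hom.app (extendByZeroToPushforward U N) V) := by
  rw [← LinearMap.ker_eq_bot, LinearMap.ker_eq_bot']
  intro t ht
  have ht' : N.res (inf_le_right : U ⊓ V ≤ V) t.1 = 0 := ht
  refine Subtype.ext (N.eq_zero_of_locally_eq_zero t.1 fun x hx => ?_)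
  obtain ⟨V', hx', h', c | c⟩ := t.2 x hx
  · exact ⟨V', hx', h', by rw [← N.res_res (le_inf c h') inf_le_right, ht', map_zero]⟩
  · exact ⟨V', hx', h', c⟩

lemma stalk_extendByZero_eq_zero {x : X} (hx : x ∉ U) (a : Stalk (extendByZero U N) x) :
    a = 0 := by
  obtain ⟨Nb, t, rfl⟩ := germ_surj a
  obtain ⟨V', hx', h', c⟩ := t.2 x Nb.mem
  have hres : (extendByZero U N).res h' t = 0 :=
    Subtype.ext (c.resolve_left fun hV'U => hx (hV'U hx'))
  rw [← germ_res (N₂ := ⟨V', hx'⟩) h' t, hres, germ_zero]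

lemma stalkMap_extendByZeroToPushforward_bijective {x : X} (hx : x ∈ U) :
    Function.Bijective (stalkMap (extendByZeroToPushforward U N) x) := by
  constructor
  · intro a b hab
    obtain ⟨N₁, t₁, rfl⟩ := germ_surj a
    obtain ⟨N₂, t₂, rfl⟩ := germ_surj b
    obtain ⟨W, h₁, h₂, e⟩ := exists_res_eq_of_germ_eq hab
    have e' : (extendByZero U N).res ((inf_le_inf_left U h₁).trans inf_le_right) t₁ =
        (extendByZero U N).res ((inf_le_inf_left U h₂).trans inf_le_right) t₂ := by
      refine Subtype.ext ?_
      change N.res _ t₁.1 = N.res _ t₂.1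
      rw [← N.res_res (inf_le_inf_left U h₁) (inf_le_right : U ⊓ N₁.U ≤ N₁.U),
        ← N.res_res (inf_le_inf_left U h₂) (inf_le_right : U ⊓ N₂.U ≤ N₂.U)]
      exact e
    exact germ_eq (⟨U ⊓ W.U, ⟨hx, W.mem⟩⟩ : Nbhd x) _ _ e'
  · intro b
    obtain ⟨Nb, s, rfl⟩ := germ_surj b
    refine ⟨germ (⟨U ⊓ Nb.U, ⟨hx, Nb.mem⟩⟩ : Nbhd x)
      (⟨s, isLocallyOverOrZero_of_le U N inf_le_left s⟩ : extendByZeroSubmodule U N _), ?_⟩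
    exact germ_eq (⟨U ⊓ Nb.U, ⟨hx, Nb.mem⟩⟩ : Nbhd x) le_rfl inf_le_right (N.res_res _ _ _)

lemma isGPureMono_extendByZeroToPushforward : IsGPureMono (extendByZeroToPushforward U N) := by
  refine ⟨extendByZeroToPushforward_app_injective U N, fun x => ?_⟩
  by_cases hx : x ∈ U
  · exact isPureMono_of_bijective (stalkMap_extendByZeroToPushforward_bijective U N hx)
  · have : Subsingleton (Stalk (extendByZero U N) x) :=
      ⟨fun a b => (stalk_extendByZero_eq_zero U N hx a).trans
        (stalk_extendByZero_eq_zero U N hx b).symm⟩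
    exact isPureMono_of_subsingleton _

variable {U N}

lemma comp_pushforwardUnit_eq_id {i : pushforwardInto U N ⟶ N}
    (hi : extendByZeroToPushforward U N ≫ i = extendByZeroIncl U N) :
    i ≫ pushforwardUnit U N = 𝟙 (pushforwardInto U N) := by
  refine pushforwardInto_hom_ext fun V hVU s => ?_
  let t : (extendByZero U N).obj V :=
    ⟨N.res (le_inf hVU le_rfl : V ≤ U ⊓ V) s, isLocallyOverOrZero_of_le U N hVU _⟩
  have hts : Hom.app (extendByZeroToPushforward U N) V t = s :=
    (N.res_res _ _ _).trans (N.res_id s)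
  have hit : Hom.app i V s = t.1 := by
    rw [← hts]
    exact congrArg (fun g : extendByZero U N ⟶ N => Hom.app g V t) hi
  show N.res inf_le_right (Hom.app i V s) = s
  rw [hit]
  exact (N.res_res _ _ _).trans (N.res_id s)

end ExtendByZero

lemma GPureInjective.exists_comp_pushforwardUnit_eq_id {N : OMod O} (hN : GPureInjective N)
    (U : Opens X) : ∃ i : pushforwardInto U N ⟶ N, i ≫ pushforwardUnit U N = 𝟙 _ := by
  obtain ⟨i, hi⟩ := hN _ _ _ (isGPureMono_extendByZeroToPushforward U N) (extendByZeroIncl U N)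
  exact ⟨i, comp_pushforwardUnit_eq_id hi⟩

lemma exists_section_res_of_comp_pushforwardUnit_eq_id {N : OMod O} {V W : Opens X}
    (h : W ≤ V) {i : pushforwardInto W N ⟶ N} (hi : i ≫ pushforwardUnit W N = 𝟙 _) :
    ∃ σ : N.obj W →+ N.obj V, (∀ (r : O.obj V) (m : N.obj W), σ (O.res h r • m) = r • σ m) ∧
      ∀ m : N.obj W, N.res h (σ m) = m := by
  -- `N(W) ≅ N(W ⊓ V) = ι_{W,*}(N|_W)(V)`, followed by the component of `i` over `V`
  let toPushforward : N.obj W →+ (pushforwardInto W N).obj V := N.res inf_le_left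
  refine ⟨(Hom.app i V).toAddMonoidHom.comp toPushforward, fun r m => ?_, fun m => ?_⟩
  · have hsmul : toPushforward (O.res h r • m) = r • toPushforward m := by
      change N.res (inf_le_left : W ⊓ V ≤ W) (O.res h r • m) =
        O.res (inf_le_right : W ⊓ V ≤ V) r • N.res (inf_le_left : W ⊓ V ≤ W) m
      rw [N.res_smul, O.res_res]
    exact (congrArg (Hom.app i V) hsmul).trans (map_smul _ _ _)
  · have hunit : N.res (inf_le_right : W ⊓ V ≤ V) (Hom.app i V (toPushforward m)) =
        toPushforward m :=
      congrArg (fun g : pushforwardInto W N ⟶ pushforwardInto W N =>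
        Hom.app g V (toPushforward m)) hi
    change N.res h (Hom.app i V (toPushforward m)) = m
    rw [← N.res_res (le_inf le_rfl h : W ≤ W ⊓ V) inf_le_right, hunit]
    exact (N.res_res _ _ _).trans (N.res_id m)

end SheafPurity

open SheafPurity CategoryTheory in
/-- Let `N` be a g-pure-injective `O_X`-module on a ringed space `X`.
Then every restriction map `N(V) → N(W)` (for open `W ⊆ V`) is a split epimorphism of
`O_X(V)`-modules, and for every open `U ⊆ X` the direct image `ι_{U,*}(N|_U)` is a
direct summand of `N`. -/
theorem gPureInjective_restriction_split_and_pushforward_summand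
    {X : Type u} [TopologicalSpace X] (O : RingSheaf X) (N : OMod O)
    (hN : GPureInjective N) :
    (∀ (V W : Opens X) (h : W ≤ V), ∃ σ : N.obj W →+ N.obj V,
      (∀ (r : O.obj V) (m : N.obj W), σ (O.res h r • m) = r • σ m) ∧
      ∀ m : N.obj W, N.res h (σ m) = m) ∧
    (∀ U : Opens X, ∃ (i : pushforwardInto U N ⟶ N) (r : N ⟶ pushforwardInto U N),
      i ≫ r = 𝟙 (pushforwardInto U N)) :=
  ⟨fun _ _ h => (hN.exists_comp_pushforwardUnit_eq_id _).elim fun _ hi =>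
      exists_section_res_of_comp_pushforwardUnit_eq_id h hi,
    fun U => (hN.exists_comp_pushforwardUnit_eq_id U).elim fun i hi => ⟨i, _, hi⟩⟩
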